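/- arXiv:1512.02944 — 2 statements merged into one kernel-verified Lean document; each statement's English description precedes it below -/
import Mathlib

section
/- Define φ₀(t) = (A²B/π)·erf(√(Bt)) + (A√B·e^{−Bt}/(2π^{3/2}t^{3/2}))·(2At − 1) and φ₁(t) = (A²Bt/π)·erf(√(Bt)) + (e^{−Bt}/(4π^{3/2}√B·t^{3/2}))·(4A²Bt² − 2A²t + A + 2B). Then for constants C₀, C₁, the combination C₀φ₀(t) + C₁φ₁(t) remains bounded by O(t^{−1/2}) as t → 0⁺ (i.e., t^{3/2}·(C₀φ₀(t) + C₁φ₁(t)) → 0) if and only if C₀ = C₁·(A + 2B)/(2AB). -/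
open Filter Topology

theorem incompressible_boundary_layer_regularity
    (A B C₀ C₁ : ℝ) (hA : 0 < A) (hB : 0 < B)
    (erf φ₀ φ₁ : ℝ → ℝ)
    (herf : erf = fun x => (2 / Real.sqrt Real.pi) *
        ∫ t in (0:ℝ)..x, Real.exp (-t ^ 2))
    (hφ₀ : φ₀ = fun t => A ^ 2 * B / Real.pi * erf (Real.sqrt (B * t)) +
        A * Real.sqrt B * Real.exp (-(B * t)) /
          (2 * Real.pi ^ ((3:ℝ)/2) * t ^ ((3:ℝ)/2)) * (2 * A * t - 1))
    (hφ₁ : φ₁ = fun t => A ^ 2 * B * t / Real.pi * erf (Real.sqrt (B * t)) +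
        Real.exp (-(B * t)) / (4 * Real.pi ^ ((3:ℝ)/2) * Real.sqrt B * t ^ ((3:ℝ)/2)) *
          (4 * A ^ 2 * B * t ^ 2 - 2 * A ^ 2 * t + A + 2 * B)) :
    (Tendsto (fun t => t ^ ((3:ℝ)/2) * (C₀ * φ₀ t + C₁ * φ₁ t))
        (nhdsWithin 0 (Set.Ioi 0)) (nhds 0)) ↔
      C₀ = C₁ * (A + 2 * B) / (2 * A * B) := by
  have hπ : (0:ℝ) < Real.pi := Real.pi_pos
  have hπ32 : (0:ℝ) < Real.pi ^ ((3:ℝ)/2) := Real.rpow_pos_of_pos hπ _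
  have hsB : 0 < Real.sqrt B := Real.sqrt_pos.mpr hB
  have hss : Real.sqrt B * Real.sqrt B = B := Real.mul_self_sqrt hB.le
  set p := Real.pi ^ ((3:ℝ)/2) with hp
  set s := Real.sqrt B with hs
  -- continuity of erf at 0, erf 0 = 0
  have herfcont : Continuous erf := by
    rw [herf]
    exact continuous_const.mul
      (intervalIntegral.continuous_primitive
        (fun a b => ((Real.continuous_exp.comp (by continuity)).intervalIntegrable a b)) 0)
  have herf0 : erf 0 = 0 := by simp [herf]
  -- convergence of the building blocks
  have htid : Tendsto (fun t : ℝ => t) (nhdsWithin 0 (Set.Ioi 0)) (nhds 0) :=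
    tendsto_id.mono_left nhdsWithin_le_nhds
  have hpow : Tendsto (fun t : ℝ => t ^ ((3:ℝ)/2)) (nhdsWithin 0 (Set.Ioi 0)) (nhds 0) := by
    have : ContinuousAt (fun t : ℝ => t ^ ((3:ℝ)/2)) 0 :=
      Real.continuousAt_rpow_const 0 _ (Or.inr (by norm_num))
    have h0 : (0:ℝ) ^ ((3:ℝ)/2) = 0 := Real.zero_rpow (by norm_num)
    simpa [h0] using this.continuousWithinAt.tendsto
  have herft : Tendsto (fun t : ℝ => erf (Real.sqrt (B * t)))
      (nhdsWithin 0 (Set.Ioi 0)) (nhds 0) := by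
    have : ContinuousAt (fun t : ℝ => erf (Real.sqrt (B * t))) 0 := by
      apply herfcont.continuousAt.comp
      exact (Real.continuous_sqrt.comp (continuous_const.mul continuous_id)).continuousAt
    have h2 : Tendsto (fun t : ℝ => erf (Real.sqrt (B * t))) (nhdsWithin 0 (Set.Ioi 0))
        (nhds (erf (Real.sqrt (B * 0)))) := this.tendsto.mono_left nhdsWithin_le_nhds
    simpa [herf0] using h2
  -- the limit value
  set L : ℝ := C₀ * (A * s * Real.exp (-(B * 0)) / (2 * p) * (2 * A * 0 - 1)) +
      C₁ * (Real.exp (-(B * 0)) / (4 * p * s) *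
        (4 * A ^ 2 * B * 0 ^ 2 - 2 * A ^ 2 * 0 + A + 2 * B)) with hL
  -- the function after cancelling t^(3/2)
  set G : ℝ × ℝ × ℝ → ℝ := fun q =>
      C₀ * (q.2.1 * (A ^ 2 * B / Real.pi) * q.2.2 +
        A * s * Real.exp (-(B * q.1)) / (2 * p) * (2 * A * q.1 - 1)) +
      C₁ * (q.2.1 * q.1 * (A ^ 2 * B / Real.pi) * q.2.2 +
        Real.exp (-(B * q.1)) / (4 * p * s) *
          (4 * A ^ 2 * B * q.1 ^ 2 - 2 * A ^ 2 * q.1 + A + 2 * B)) with hG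
  have hGc : Continuous G := by unfold G; fun_prop
  have htriple : Tendsto (fun t : ℝ => ((t, t ^ ((3:ℝ)/2), erf (Real.sqrt (B * t))) : ℝ × ℝ × ℝ))
      (nhdsWithin 0 (Set.Ioi 0)) (nhds ((0:ℝ), (0:ℝ), (0:ℝ))) :=
    htid.prodMk_nhds (hpow.prodMk_nhds herft)
  have hGL : Tendsto (fun t : ℝ => G (t, t ^ ((3:ℝ)/2), erf (Real.sqrt (B * t))))
      (nhdsWithin 0 (Set.Ioi 0)) (nhds L) := by
    have := (hGc.continuousAt (x := ((0:ℝ), (0:ℝ), (0:ℝ)))).tendsto.comp htriple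
    simpa [hG, hL, Function.comp_def] using this
  -- eventual equality on Ioi 0
  have heq : (fun t => t ^ ((3:ℝ)/2) * (C₀ * φ₀ t + C₁ * φ₁ t))
      =ᶠ[nhdsWithin 0 (Set.Ioi 0)]
      (fun t : ℝ => G (t, t ^ ((3:ℝ)/2), erf (Real.sqrt (B * t)))) := by
    filter_upwards [self_mem_nhdsWithin] with t ht
    have ht' : (0:ℝ) < t := ht
    have htp : (0:ℝ) < t ^ ((3:ℝ)/2) := Real.rpow_pos_of_pos ht' _
    rw [hφ₀, hφ₁]
    simp only [hG]
    field_simp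
  have hmain : Tendsto (fun t => t ^ ((3:ℝ)/2) * (C₀ * φ₀ t + C₁ * φ₁ t))
      (nhdsWithin 0 (Set.Ioi 0)) (nhds L) := Tendsto.congr' heq.symm hGL
  have hLiff : L = 0 ↔ C₀ = C₁ * (A + 2 * B) / (2 * A * B) := by
    rw [hL]
    simp only [mul_zero, neg_zero, Real.exp_zero]
    rw [eq_div_iff (by positivity : 2 * A * B ≠ 0)]
    constructor
    · intro h
      field_simp at h
      have h2 : 2 * p * (C₁ * (A + 2 * B) - C₀ * (2 * A * B)) = 0 := by
        linear_combination p * h + 4 * p * C₀ * A * hss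
      have h3 : C₁ * (A + 2 * B) - C₀ * (2 * A * B) = 0 :=
        (mul_eq_zero.mp h2).resolve_left (by positivity)
      linarith
    · intro h
      have e1 : C₀ * (A * s * 1 / (2 * p) * (2 * A * 0 - 1)) +
          C₁ * (1 / (4 * p * s) * (4 * A ^ 2 * B * 0 ^ 2 - 2 * A ^ 2 * 0 + A + 2 * B)) =
          (C₁ * (A + 2 * B) - C₀ * (2 * A * (s * s))) / (4 * p * s) := by
        field_simp
        ring
      rw [hss, h, sub_self, zero_div] at e1
      linear_combination e1
  constructor
  · intro h
    exact hLiff.mp (tendsto_nhds_unique hmain h)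
  · intro h
    have : L = 0 := hLiff.mpr h
    rwa [this] at hmain
end

section
/- Under the regularity condition C₀ = C₁(A + 2B)/(2AB), the limit lim_{t→0⁺} t^{1/2}·(C₀φ₀(t) + C₁φ₁(t)) equals C₁·A√B/π^{3/2}. -/
open Filter Topology

theorem incompressible_boundary_layer_SIF
    (A B C₀ C₁ : ℝ) (hA : 0 < A) (hB : 0 < B)
    (hC₀ : C₀ = C₁ * (A + 2 * B) / (2 * A * B))
    (erf φ₀ φ₁ : ℝ → ℝ)
    (herf : erf = fun x => (2 / Real.sqrt Real.pi) *
        ∫ t in (0:ℝ)..x, Real.exp (-t ^ 2))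
    (hφ₀ : φ₀ = fun t => A ^ 2 * B / Real.pi * erf (Real.sqrt (B * t)) +
        A * Real.sqrt B * Real.exp (-(B * t)) /
          (2 * Real.pi ^ ((3:ℝ)/2) * t ^ ((3:ℝ)/2)) * (2 * A * t - 1))
    (hφ₁ : φ₁ = fun t => A ^ 2 * B * t / Real.pi * erf (Real.sqrt (B * t)) +
        Real.exp (-(B * t)) / (4 * Real.pi ^ ((3:ℝ)/2) * Real.sqrt B * t ^ ((3:ℝ)/2)) *
          (4 * A ^ 2 * B * t ^ 2 - 2 * A ^ 2 * t + A + 2 * B)) :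
    Tendsto (fun t => Real.sqrt t * (C₀ * φ₀ t + C₁ * φ₁ t))
        (nhdsWithin 0 (Set.Ioi 0))
        (nhds (C₁ * A * Real.sqrt B / Real.pi ^ ((3:ℝ)/2))) := by
  have herfc : Continuous erf := by
    rw [herf]
    exact continuous_const.mul (intervalIntegral.continuous_primitive
      (fun a b => ((Real.continuous_exp.comp (by continuity)).intervalIntegrable a b)) 0)
  set g : ℝ → ℝ := fun t => Real.sqrt t *
      ((C₀ * A ^ 2 * B / Real.pi + C₁ * A ^ 2 * B * t / Real.pi) * erf (Real.sqrt (B * t))) +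
      Real.exp (-(B * t)) * (C₁ * A * Real.sqrt B * (1 + A * t)) / Real.pi ^ ((3:ℝ)/2)
    with hg
  have hQ : Real.pi ^ ((3:ℝ)/2) ≠ 0 := (Real.rpow_pos_of_pos Real.pi_pos _).ne'
  have hgc : ContinuousAt g 0 := by fun_prop
  have h0 : g 0 = C₁ * A * Real.sqrt B / Real.pi ^ ((3:ℝ)/2) := by
    simp [hg]
  have htg : Tendsto g (nhdsWithin 0 (Set.Ioi 0)) (nhds (g 0)) :=
    (hgc.continuousWithinAt : ContinuousWithinAt g (Set.Ioi 0) 0)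
  rw [h0] at htg
  refine Tendsto.congr' ?_ htg
  filter_upwards [self_mem_nhdsWithin] with t ht
  have ht' : (0:ℝ) < t := ht
  have hs : Real.sqrt t ^ 2 = t := Real.sq_sqrt ht'.le
  have hb : Real.sqrt B ^ 2 = B := Real.sq_sqrt hB.le
  have hs0 : Real.sqrt t ≠ 0 := (Real.sqrt_pos.mpr ht').ne'
  have hb0 : Real.sqrt B ≠ 0 := (Real.sqrt_pos.mpr hB).ne'
  have h32 : t ^ ((3:ℝ)/2) = t * Real.sqrt t := by
    rw [show (3:ℝ)/2 = 1 + 1/2 by norm_num, Real.rpow_add ht', Real.rpow_one,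
      ← Real.sqrt_eq_rpow]
  have hA0 : A ≠ 0 := hA.ne'
  have hB0 : B ≠ 0 := hB.ne'
  rw [hg, hφ₀, hφ₁]
  simp only
  set R := erf (Real.sqrt (B * t)) with hR
  set E := Real.exp (-(B * t)) with hE
  set Q := Real.pi ^ ((3:ℝ)/2) with hQ'
  rw [h32, hC₀]
  rw [← hs, ← hb]
  field_simp
  ring_nf
  rw [hs, hb]
  clear_value R E Q
  generalize Real.sqrt B = b at hb ⊢
  generalize Real.sqrt t = s at hs ⊢
  subst hb hs
  ring
end
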